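/- Let S be a species tree on n ≥ 1 leaves and let 𝒢₁, 𝒢₂ ∈ 𝖦^S be two reconciled gene trees with exactly one gene per species. Then d_path(𝒢₁, 𝒢₂) ≤ H(S). -/

import Mathlib

open SimpleGraph

attribute [local instance] Classical.propDecidable

/-- A rooted tree: a finite connected acyclic graph with a distinguished root. -/
structure RTree (V : Type*) [Fintype V] where
  adj : SimpleGraph V
  isTree : adj.IsTree
  root : V

variable {V : Type*} [Fintype V]

/-- `Anc T a b` : `a` is an ancestor of `b` (i.e. `b ⪯ a`), expressed as:
`a` lies on the (unique) path from the root to `b`. -/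
def Anc (T : RTree V) (a b : V) : Prop :=
  T.adj.dist T.root b = T.adj.dist T.root a + T.adj.dist a b

/-- `IsChild T c p` : `c` is a child of `p`. -/
def IsChild (T : RTree V) (c p : V) : Prop :=
  T.adj.Adj c p ∧ Anc T p c

/-- The set of children of `v`. -/
def childSet (T : RTree V) (v : V) : Set V := {c | IsChild T c v}

/-- A leaf is a node with no children. -/
def IsLeaf (T : RTree V) (v : V) : Prop := ∀ c, ¬ IsChild T c v

/-- The clade of `v`: the set of leaves descending from `v`. -/
def clade (T : RTree V) (v : V) : Set V := {x | IsLeaf T x ∧ Anc T v x}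

/-- `w` is the lowest common ancestor of the set `X` in `T`. -/
def IsLCA (T : RTree V) (X : Set V) (w : V) : Prop :=
  (∀ x ∈ X, Anc T w x) ∧ ∀ w', (∀ x ∈ X, Anc T w' x) → Anc T w' w

/-- A species tree is a rooted binary tree: every internal node has exactly two children. -/
def IsSpeciesTree (S : RTree V) : Prop :=
  ∀ v, ¬ IsLeaf S v → (childSet S v).ncard = 2

/-- Number of leaves of a rooted tree. -/
noncomputable def numLeaves (T : RTree V) : ℕ := {v | IsLeaf T v}.ncard

/-- `Hsum S` = `H(S)`: the sum of root-to-internal-node distances in `S`. -/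
noncomputable def Hsum (S : RTree V) : ℕ :=
  ∑ v : V, if IsLeaf S v then 0 else S.adj.dist S.root v

inductive Evt | dup | spec | extant
deriving DecidableEq

/-- A reconciled gene tree with species tree `S`, whose leaves are labeled bijectively by
the set of genes `Γ`. -/
structure Recon (Γ : Type*) (VG : Type*) (VS : Type*) [Fintype VG] [Fintype VS]
    (S : RTree VS) where
  tree : RTree VG
  geneLeaf : Γ → VG
  geneLeaf_inj : Function.Injective geneLeaf
  geneLeaf_range : ∀ v, IsLeaf tree v ↔ ∃ g, geneLeaf g = v
  μ : VG → VS
  lbl : VG → Evt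
  internal_children : ∀ v, ¬ IsLeaf tree v → 2 ≤ (childSet tree v).ncard
  leaf_species : ∀ v, IsLeaf tree v → IsLeaf S (μ v)
  leaf_lbl : ∀ v, IsLeaf tree v → lbl v = Evt.extant
  internal_lbl : ∀ v, ¬ IsLeaf tree v → lbl v = Evt.dup ∨ lbl v = Evt.spec
  time_consistent : ∀ a b, Anc tree a b → Anc S (μ a) (μ b)
  spec_two_children : ∀ v, lbl v = Evt.spec →
    ¬ IsLeaf S (μ v) ∧ (childSet tree v).ncard = 2
  spec_separates : ∀ v, lbl v = Evt.spec →
    ∀ v₁ v₂, IsChild tree v₁ v → IsChild tree v₂ v → v₁ ≠ v₂ →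
      ∃ s₁ s₂, IsChild S s₁ (μ v) ∧ IsChild S s₂ (μ v) ∧ s₁ ≠ s₂ ∧
        ((Anc S s₁ (μ v₁) ∧ Anc S s₂ (μ v₂)) ∨ (Anc S s₂ (μ v₁) ∧ Anc S s₁ (μ v₂)))

variable {Γ : Type*} {VS VG₁ VG₂ : Type*} [Fintype VS] [Fintype VG₁] [Fintype VG₂]
  {S : RTree VS}

/-- The clade of a gene tree node, as a set of genes. -/
def gclade (𝒢 : Recon Γ VG₁ VS S) (v : VG₁) : Set Γ :=
  {g | Anc 𝒢.tree v (𝒢.geneLeaf g)}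

/-- Two reconciled gene trees (over the same species tree and gene set) are comparable if
corresponding extant genes map to the same species. -/
def Comparable (𝒢₁ : Recon Γ VG₁ VS S) (𝒢₂ : Recon Γ VG₂ VS S) : Prop :=
  ∀ g, 𝒢₁.μ (𝒢₁.geneLeaf g) = 𝒢₂.μ (𝒢₂.geneLeaf g)

/-- `m` is the correspondence map `v ↦ lca_{G₂}(L(G₁(v)))`. -/
def IsLcaMap (𝒢₁ : Recon Γ VG₁ VS S) (𝒢₂ : Recon Γ VG₂ VS S) (m : VG₁ → VG₂) : Prop :=
  ∀ v, IsLCA 𝒢₂.tree (𝒢₂.geneLeaf '' gclade 𝒢₁ v) (m v)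

/-- `μ` is the lca-mapping: every node maps to the lca of the species of its leaf descendants. -/
def UsesLcaMapping (𝒢 : Recon Γ VG₁ VS S) : Prop :=
  ∀ v, IsLCA S (𝒢.μ '' clade 𝒢.tree v) (𝒢.μ v)

/-- The path component `d_path(𝒢₁,𝒢₂)` (with `m` the lca correspondence map). -/
noncomputable def dPath (𝒢₁ : Recon Γ VG₁ VS S) (𝒢₂ : Recon Γ VG₂ VS S)
    (m : VG₁ → VG₂) : ℕ :=
  ∑ v : VG₁, S.adj.dist (𝒢₁.μ v) (𝒢₂.μ (m v))

/-- The label component `d_lbl(𝒢₁,𝒢₂)`. -/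
noncomputable def dLbl (𝒢₁ : Recon Γ VG₁ VS S) (𝒢₂ : Recon Γ VG₂ VS S)
    (m : VG₁ → VG₂) : ℕ :=
  {v : VG₁ | 𝒢₁.lbl v ≠ 𝒢₂.lbl (m v)}.ncard

/-- The asymmetric dissimilarity `d_asym = α·d_path + (1−α)·d_lbl`. -/
noncomputable def dAsym (α : ℝ) (𝒢₁ : Recon Γ VG₁ VS S) (𝒢₂ : Recon Γ VG₂ VS S)
    (m : VG₁ → VG₂) : ℝ :=
  α * (dPath 𝒢₁ 𝒢₂ m : ℝ) + (1 - α) * (dLbl 𝒢₁ 𝒢₂ m : ℝ)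

/-- The Path-Label Reconciliation dissimilarity `PLR(𝒢₁,𝒢₂)`, where `m₁₂`, `m₂₁` are the
lca correspondence maps in the two directions. -/
noncomputable def PLR (α : ℝ) (𝒢₁ : Recon Γ VG₁ VS S) (𝒢₂ : Recon Γ VG₂ VS S)
    (m₁₂ : VG₁ → VG₂) (m₂₁ : VG₂ → VG₁) : ℝ :=
  dAsym α 𝒢₁ 𝒢₂ m₁₂ + dAsym α 𝒢₂ 𝒢₁ m₂₁

/-- An edge `uv` (with `u` the parent of `v`) is redundant if both endpoints are duplications
mapped to the same species. -/
def RedundantEdge (𝒢 : Recon Γ VG₁ VS S) (u v : VG₁) : Prop :=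
  IsChild 𝒢.tree v u ∧ 𝒢.μ u = 𝒢.μ v ∧ 𝒢.lbl u = Evt.dup ∧ 𝒢.lbl v = Evt.dup

/-- A reconciled gene tree is least duplication-resolved if it has no redundant edge. -/
def LeastDupResolved (𝒢 : Recon Γ VG₁ VS S) : Prop :=
  ∀ u v, ¬ RedundantEdge 𝒢 u v

/-- `𝒢'` is obtained from `𝒢` by contracting the edge `uv` (`u` the parent of `v`), i.e.
deleting `v` and attaching its children to `u`; `φ` is the corresponding quotient map. -/
def IsContractionOf (𝒢 : Recon Γ VG₁ VS S) (u v : VG₁) (𝒢' : Recon Γ VG₂ VS S)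
    (φ : VG₁ → VG₂) : Prop :=
  Function.Surjective φ ∧
  φ u = φ v ∧
  (∀ a b, φ a = φ b → a = b ∨ (a = u ∧ b = v) ∨ (a = v ∧ b = u)) ∧
  (∀ x y, 𝒢'.tree.adj.Adj x y ↔
    ∃ a b, φ a = x ∧ φ b = y ∧ 𝒢.tree.adj.Adj a b ∧ ¬(a = u ∧ b = v) ∧ ¬(a = v ∧ b = u)) ∧
  𝒢'.tree.root = φ 𝒢.tree.root ∧
  (∀ g, 𝒢'.geneLeaf g = φ (𝒢.geneLeaf g)) ∧
  (∀ a, 𝒢'.μ (φ a) = 𝒢.μ a) ∧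
  (∀ a, 𝒢'.lbl (φ a) = 𝒢.lbl a)

/-- Symmetrized redundancy relation on nodes. -/
def RedundantAdj (𝒢 : Recon Γ VG₁ VS S) (a b : VG₁) : Prop :=
  RedundantEdge 𝒢 a b ∨ RedundantEdge 𝒢 b a

/-- `𝒢'` is the least duplication-resolved tree `LR(𝒢)` obtained by contracting every
redundant edge of `𝒢`; `φ` is the corresponding quotient map. -/
def IsLROf (𝒢 : Recon Γ VG₁ VS S) (𝒢' : Recon Γ VG₂ VS S) (φ : VG₁ → VG₂) : Prop :=
  Function.Surjective φ ∧
  (∀ a b, φ a = φ b ↔ Relation.EqvGen (RedundantAdj 𝒢) a b) ∧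
  (∀ x y, 𝒢'.tree.adj.Adj x y ↔
    ∃ a b, φ a = x ∧ φ b = y ∧ 𝒢.tree.adj.Adj a b ∧ ¬ RedundantAdj 𝒢 a b) ∧
  𝒢'.tree.root = φ 𝒢.tree.root ∧
  (∀ g, 𝒢'.geneLeaf g = φ (𝒢.geneLeaf g)) ∧
  (∀ a, 𝒢'.μ (φ a) = 𝒢.μ a) ∧
  (∀ a, 𝒢'.lbl (φ a) = 𝒢.lbl a)

/-- Isomorphism of reconciled gene trees: a leaf-fixing bijection preserving edges,
species maps and event labels. -/
def ReconIso (𝒢₁ : Recon Γ VG₁ VS S) (𝒢₂ : Recon Γ VG₂ VS S) : Prop :=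
  ∃ φ : VG₁ ≃ VG₂,
    (∀ g, φ (𝒢₁.geneLeaf g) = 𝒢₂.geneLeaf g) ∧
    (∀ a b, 𝒢₂.tree.adj.Adj (φ a) (φ b) ↔ 𝒢₁.tree.adj.Adj a b) ∧
    (∀ v, 𝒢₂.μ (φ v) = 𝒢₁.μ v) ∧
    (∀ v, 𝒢₂.lbl (φ v) = 𝒢₁.lbl v)

/-- Exactly one gene per species: the gene set is the set of species leaves, and each gene
resides in its own species. -/
def OneGenePerSpecies (𝒢 : Recon {s : VS // IsLeaf S s} VG₁ VS S) : Prop :=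
  ∀ g, 𝒢.μ (𝒢.geneLeaf g) = g.1

/-!
Leaves of `G₁` contribute nothing to `d_path`, because `m` fixes every extant gene. For an
internal node `v`, both `μ₁ v` and `μ₂ (m v)` lie above the species of all genes below `v`, so
they are comparable, and their distance is at most the depth of the lower one, `w v`, which still
lies above all those species. A depth is the number of non-root ancestors, so after exchanging
sums it suffices that for every species `y` there are at most as many internal `v` with
`w v ⪯ y` as internal nodes of `S` below `y`. The clades of those `v` are distinct gene sets of
size at least two forming a laminar family on the `k` leaves below `y` (one gene per species),
so there are at most `k - 1` of them; and `k - 1` is the number of internal nodes below `y`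
because `S` is binary.
-/

open Finset

section Laminar

variable {α : Type*}

def IsLaminar (F : Finset (Finset α)) : Prop :=
  ∀ A ∈ F, ∀ B ∈ F, A ⊆ B ∨ B ⊆ A ∨ Disjoint A B

lemma IsLaminar.mono {F G : Finset (Finset α)} (hF : IsLaminar F) (h : G ⊆ F) : IsLaminar G :=
  fun A hA B hB => hF A (h hA) B (h hB)

lemma IsLaminar.image_erase [DecidableEq α] {F : Finset (Finset α)} (hF : IsLaminar F) (b : α) :
    IsLaminar (F.image (·.erase b)) := by
  simp only [IsLaminar, forall_mem_image]
  intro B hB C hC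
  rcases hF B hB C hC with h | h | h
  · exact Or.inl (erase_subset_erase b h)
  · exact Or.inr (Or.inl (erase_subset_erase b h))
  · exact Or.inr (Or.inr (h.mono (erase_subset b B) (erase_subset b C)))

lemma injOn_erase_of_forall_mem_iff [DecidableEq α] {𝒜 : Finset (Finset α)} {a b : α}
    (hab : a ≠ b) (h : ∀ B ∈ 𝒜, a ∈ B ↔ b ∈ B) : Set.InjOn (·.erase b) (𝒜 : Set (Finset α)) := by
  have hb_iff : ∀ B ∈ 𝒜, b ∈ B ↔ a ∈ B.erase b := fun B hB => by
    rw [mem_erase, and_iff_right hab, h B hB]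
  intro B hB C hC hBC
  simp only at hBC
  by_cases hbB : b ∈ B
  · have hbC : b ∈ C := (hb_iff C hC).mpr (hBC ▸ (hb_iff B hB).mp hbB)
    rw [← insert_erase hbB, ← insert_erase hbC, hBC]
  · have hbC : b ∉ C := fun hbC => hbB ((hb_iff B hB).mpr (hBC ▸ (hb_iff C hC).mp hbC))
    rwa [erase_eq_of_notMem hbB, erase_eq_of_notMem hbC] at hBC

/- Induction on `#F`: two points `a ≠ b` of an inclusion-minimal member `A` are never separated by
another member, so deleting `b` from every other member injects `F.erase A` into a laminar family
on `L.erase b` whose members still have at least two elements. -/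
theorem IsLaminar.card_le_card_sub_one [DecidableEq α] {F : Finset (Finset α)} {L : Finset α}
    (hF : IsLaminar F) (hL : ∀ A ∈ F, A ⊆ L) (htwo : ∀ A ∈ F, 2 ≤ #A) : #F ≤ #L - 1 := by
  induction hn : #F generalizing F L with
  | zero => exact Nat.zero_le _
  | succ n ih =>
    obtain ⟨A, hA, hAmin⟩ := exists_min_image F card (card_pos.mp (by omega))
    obtain ⟨a, ha, b, hb, hab⟩ := one_lt_card.mp (htwo A hA)
    have hsep : ∀ B ∈ F.erase A, A ⊂ B ∨ Disjoint A B := by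
      intro B hB
      obtain ⟨hBA, hB⟩ := mem_erase.mp hB
      rcases hF A hA B hB with h | h | h
      · exact Or.inl (ssubset_of_subset_of_ne h (Ne.symm hBA))
      · exact absurd (eq_of_subset_of_card_le h (hAmin B hB)) hBA
      · exact Or.inr h
    have hinj : Set.InjOn (·.erase b) (F.erase A : Set (Finset α)) :=
      injOn_erase_of_forall_mem_iff hab fun B hB => by
        rcases hsep B hB with h | h
        · exact iff_of_true (h.subset ha) (h.subset hb)
        · exact iff_of_false (disjoint_left.mp h ha) (disjoint_left.mp h hb)
    set F' := (F.erase A).image (·.erase b)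
    have hF' : IsLaminar F' := (hF.mono (erase_subset A F)).image_erase b
    have htwo' : ∀ B ∈ F', 2 ≤ #B := by
      simp only [F', forall_mem_image]
      intro B hB
      by_cases hbB : b ∈ B
      · have hAB : A ⊂ B := (hsep B hB).resolve_right
          fun h => disjoint_left.mp h hb hbB
        have := card_lt_card hAB
        have := htwo A hA
        rw [card_erase_of_mem hbB]
        omega
      · rw [erase_eq_of_notMem hbB]
        exact htwo B (mem_of_mem_erase hB)
    have hcard : #F' = n := by
      rw [card_image_of_injOn hinj, card_erase_of_mem hA, hn, Nat.add_sub_cancel]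
    have hL' : ∀ B ∈ F', B ⊆ L.erase b := by
      simp only [F', forall_mem_image]
      exact fun B hB => erase_subset_erase b (hL B (mem_of_mem_erase hB))
    have hIH := ih hF' hL' htwo' hcard
    rw [card_erase_of_mem (hL A hA hb)] at hIH
    have := card_le_card (hL A hA)
    have := htwo A hA
    omega

end Laminar

lemma SimpleGraph.Walk.dist_add_dist_of_mem_support {W : Type*} {G : SimpleGraph W} {u v w : W}
    (p : G.Walk u v) (hp : p.length = G.dist u v) (hw : w ∈ p.support) :
    G.dist u w + G.dist w v = G.dist u v := by
  rw [← length_eq_dist_of_subwalk hp (p.isSubwalk_takeUntil hw),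
    ← length_eq_dist_of_subwalk hp (p.isSubwalk_dropUntil hw), ← hp,
    ← SimpleGraph.Walk.length_append, SimpleGraph.Walk.take_spec]

section RootedTree

namespace RTree

variable (T : RTree V)

noncomputable def depth (v : V) : ℕ := T.adj.dist T.root v

noncomputable def below (x : V) : Finset V := Finset.univ.filter (Anc T x ·)

lemma connected : T.adj.Connected := T.isTree.connected

end RTree

variable {T : RTree V} {a b c x : V}

lemma anc_iff_depth : Anc T a b ↔ T.depth b = T.depth a + T.adj.dist a b := Iff.rfl

lemma mem_below : b ∈ T.below a ↔ Anc T a b := by simp [RTree.below]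

lemma Anc.refl (T : RTree V) (a : V) : Anc T a a := by simp [Anc]

lemma anc_root (T : RTree V) (a : V) : Anc T T.root a := by simp [Anc]

lemma Anc.trans (hab : Anc T a b) (hbc : Anc T b c) : Anc T a c := by
  have := T.connected.dist_triangle (u := T.root) (v := a) (w := c)
  have := T.connected.dist_triangle (u := a) (v := b) (w := c)
  unfold Anc at *
  omega

lemma Anc.depth_le (h : Anc T a b) : T.depth a ≤ T.depth b := by
  rw [anc_iff_depth] at h; omega

lemma Anc.dist_le_depth (h : Anc T a b) : T.adj.dist a b ≤ T.depth b := by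
  rw [anc_iff_depth] at h; omega

lemma Anc.eq_of_depth_le (h : Anc T a b) (hd : T.depth b ≤ T.depth a) : a = b := by
  rw [anc_iff_depth] at h
  exact T.connected.dist_eq_zero_iff.mp (by omega)

lemma Anc.antisymm (hab : Anc T a b) (hba : Anc T b a) : a = b :=
  hab.eq_of_depth_le hba.depth_le

lemma IsChild.depth_eq (h : IsChild T c x) : T.depth c = T.depth x + 1 := by
  unfold RTree.depth
  rw [h.2, SimpleGraph.dist_eq_one_iff_adj.mpr h.1.symm]

lemma IsChild.not_isLeaf (h : IsChild T c x) : ¬ IsLeaf T x := fun hx => hx c h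

lemma IsChild.not_anc (h : IsChild T c x) : ¬ Anc T c x := fun h' => by
  have := h'.depth_le
  rw [h.depth_eq] at this
  omega

lemma anc_iff_mem_support (p : T.adj.Walk T.root c) (hp : p.length = T.depth c) :
    Anc T a c ↔ a ∈ p.support := by
  refine ⟨fun hac => ?_, fun ha => (p.dist_add_dist_of_mem_support hp ha).symm⟩
  obtain ⟨q₁, hq₁⟩ := T.connected.exists_walk_length_eq_dist T.root a
  obtain ⟨q₂, hq₂⟩ := T.connected.exists_walk_length_eq_dist a c
  have hq : (q₁.append q₂).length = T.adj.dist T.root c := by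
    rw [SimpleGraph.Walk.length_append, hq₁, hq₂]; exact hac.symm
  have hpq : p = q₁.append q₂ := (T.isTree.existsUnique_path T.root c).unique
    (p.isPath_of_length_eq_dist hp) ((q₁.append q₂).isPath_of_length_eq_dist hq)
  rw [hpq, SimpleGraph.Walk.mem_support_append_iff]
  exact Or.inl q₁.end_mem_support

lemma Anc.anc_of_depth_le (hac : Anc T a c) (hbc : Anc T b c)
    (hd : T.depth a ≤ T.depth b) : Anc T a b := by
  obtain ⟨p, hp⟩ := T.connected.exists_walk_length_eq_dist T.root c
  have hb := (anc_iff_mem_support p hp).mp hbc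
  have ha := (anc_iff_mem_support p hp).mp hac
  rw [← p.take_spec hb, SimpleGraph.Walk.mem_support_append_iff] at ha
  rcases ha with ha | ha
  · exact (anc_iff_mem_support _
      (length_eq_dist_of_subwalk hp (p.isSubwalk_takeUntil hb))).mpr ha
  · have := (p.dropUntil b hb).dist_add_dist_of_mem_support
      (length_eq_dist_of_subwalk hp (p.isSubwalk_dropUntil hb)) ha
    have hba : Anc T b a := by unfold Anc RTree.depth at *; omega
    rw [hba.eq_of_depth_le hd]
    exact Anc.refl T a

lemma Anc.total (hac : Anc T a c) (hbc : Anc T b c) : Anc T a b ∨ Anc T b a :=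
  (le_total (T.depth a) (T.depth b)).imp (hac.anc_of_depth_le hbc)
    (hbc.anc_of_depth_le hac)

lemma IsChild.eq_of_anc (h₁ : IsChild T a x) (h₂ : IsChild T b x) (ha : Anc T a c)
    (hb : Anc T b c) : a = b :=
  (ha.anc_of_depth_le hb (by rw [h₁.depth_eq, h₂.depth_eq])).eq_of_depth_le
    (by rw [h₁.depth_eq, h₂.depth_eq])

lemma Anc.exists_isChild (hxc : Anc T x c) (hne : x ≠ c) : ∃ y, IsChild T y x ∧ Anc T y c := by
  obtain ⟨p, hp⟩ := T.connected.exists_walk_length_eq_dist x c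
  cases p with
  | nil => exact absurd rfl hne
  | @cons _ y _ hxy q =>
    have hq : T.adj.dist y c ≤ q.length := SimpleGraph.dist_le q
    have := T.connected.dist_triangle (u := x) (v := y) (w := c)
    have := T.connected.dist_triangle (u := T.root) (v := x) (w := y)
    have := T.connected.dist_triangle (u := T.root) (v := y) (w := c)
    have hxy1 : T.adj.dist x y = 1 := SimpleGraph.dist_eq_one_iff_adj.mpr hxy
    simp only [SimpleGraph.Walk.length_cons] at hp
    refine ⟨y, ⟨hxy.symm, ?_⟩, ?_⟩ <;> unfold Anc at * <;> omega

lemma Anc.eq_of_isLeaf (hx : IsLeaf T x) (h : Anc T x c) : c = x := by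
  by_contra hne
  obtain ⟨y, hy, -⟩ := h.exists_isChild (Ne.symm hne)
  exact hx y hy

lemma exists_isLeaf_anc (T : RTree V) (x : V) : ∃ l, IsLeaf T l ∧ Anc T x l := by
  obtain ⟨l, hl, hmax⟩ := (T.below x).exists_max_image T.depth ⟨x, mem_below.mpr (Anc.refl T x)⟩
  refine ⟨l, fun y hy => ?_, mem_below.mp hl⟩
  have := hmax y (mem_below.mpr ((mem_below.mp hl).trans hy.2))
  rw [hy.depth_eq] at this
  omega

end RootedTree

section Depth

variable {T : RTree V}

lemma card_filter_anc (T : RTree V) (c : V) : #(univ.filter (Anc T · c)) = T.depth c + 1 := by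
  obtain ⟨p, hp⟩ := T.connected.exists_walk_length_eq_dist T.root c
  have hsupp : univ.filter (Anc T · c) = p.support.toFinset := by
    ext a
    simp only [mem_filter, mem_univ, true_and, List.mem_toFinset]
    exact anc_iff_mem_support p hp
  rw [hsupp, List.toFinset_card_of_nodup (p.isPath_of_length_eq_dist hp).support_nodup,
    SimpleGraph.Walk.length_support, hp, RTree.depth]

lemma sum_depth_eq_sum_card_filter_anc {ι : Type*} (I : Finset ι) (f : ι → V) :
    ∑ i ∈ I, T.depth (f i) = ∑ y ∈ univ.erase T.root, #(I.filter (fun i => Anc T y (f i))) := by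
  refine (sum_congr rfl fun i _ => ?_).trans
    (sum_card_bipartiteAbove_eq_sum_card_bipartiteBelow (fun i y => Anc T y (f i)))
  rw [bipartiteAbove, filter_erase, card_erase_of_mem (by simpa using anc_root T (f i)),
    card_filter_anc, Nat.add_sub_cancel]

lemma sum_depth_le_sum_depth {ι κ : Type*} (I : Finset ι) (J : Finset κ) (f : ι → V) (g : κ → V)
    (h : ∀ y, #(I.filter (fun i => Anc T y (f i))) ≤ #(J.filter (fun j => Anc T y (g j)))) :
    ∑ i ∈ I, T.depth (f i) ≤ ∑ j ∈ J, T.depth (g j) := by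
  rw [sum_depth_eq_sum_card_filter_anc, sum_depth_eq_sum_card_filter_anc]
  exact sum_le_sum fun y _ => h y

end Depth

section Binary

variable {T : RTree V} {x : V}

lemma below_eq_insert_union {c₁ c₂ : V} (h : childSet T x = {c₁, c₂}) :
    T.below x = insert x (T.below c₁ ∪ T.below c₂) := by
  have hc₁ : IsChild T c₁ x := show c₁ ∈ childSet T x by simp [h]
  have hc₂ : IsChild T c₂ x := show c₂ ∈ childSet T x by simp [h]
  ext y
  simp only [mem_insert, mem_union, mem_below]
  refine ⟨fun hxy => ?_, ?_⟩
  · by_cases hyx : y = x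
    · exact Or.inl hyx
    obtain ⟨c, hc, hcy⟩ := hxy.exists_isChild (Ne.symm hyx)
    have : c ∈ ({c₁, c₂} : Set V) := h ▸ hc
    rcases this with rfl | rfl
    · exact Or.inr (Or.inl hcy)
    · exact Or.inr (Or.inr hcy)
  · rintro (rfl | hy | hy)
    · exact Anc.refl T y
    · exact hc₁.2.trans hy
    · exact hc₂.2.trans hy

lemma below_eq_singleton_of_isLeaf (hx : IsLeaf T x) : T.below x = {x} := by
  ext y
  rw [mem_below, mem_singleton]
  exact ⟨fun h => h.eq_of_isLeaf hx, fun h => h ▸ Anc.refl T x⟩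

lemma IsChild.below_ssubset {c : V} (h : IsChild T c x) : T.below c ⊂ T.below x :=
  ssubset_of_subset_of_ne (fun _ hy => mem_below.mpr (h.2.trans (mem_below.mp hy)))
    fun he => h.not_anc (mem_below.mp (he ▸ mem_below.mpr (Anc.refl T x)))

lemma IsSpeciesTree.card_leaves_below (hT : IsSpeciesTree T) (x : V) :
    #((T.below x).filter (IsLeaf T)) = #((T.below x).filter (¬ IsLeaf T ·)) + 1 := by
  induction hn : #(T.below x) using Nat.strong_induction_on generalizing x with
  | _ n ih =>
  by_cases hx : IsLeaf T x
  · rw [below_eq_singleton_of_isLeaf hx, filter_singleton, filter_singleton, if_pos hx,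
      if_neg (not_not.mpr hx)]
    rfl
  obtain ⟨c₁, c₂, hne, h⟩ := Set.ncard_eq_two.mp (hT x hx)
  have hc₁ : IsChild T c₁ x := show c₁ ∈ childSet T x by simp [h]
  have hc₂ : IsChild T c₂ x := show c₂ ∈ childSet T x by simp [h]
  have hdisj : Disjoint (T.below c₁) (T.below c₂) := disjoint_left.mpr fun _ h₁ h₂ =>
    hne (hc₁.eq_of_anc hc₂ (mem_below.mp h₁) (mem_below.mp h₂))
  have hx_notMem : x ∉ T.below c₁ ∪ T.below c₂ := by
    simp only [mem_union, mem_below, not_or]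
    exact ⟨hc₁.not_anc, hc₂.not_anc⟩
  have ih₁ := ih _ (hn ▸ card_lt_card hc₁.below_ssubset) c₁ rfl
  have ih₂ := ih _ (hn ▸ card_lt_card hc₂.below_ssubset) c₂ rfl
  rw [below_eq_insert_union h, filter_insert, filter_insert, if_neg hx, if_pos hx,
    card_insert_of_notMem (fun hm => hx_notMem (mem_of_mem_filter x hm)), filter_union,
    filter_union, card_union_of_disjoint (disjoint_filter_filter hdisj),
    card_union_of_disjoint (disjoint_filter_filter hdisj)]
  omega

end Binary

section Lower

variable {T : RTree V} {a b c : V}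

noncomputable def lowerOf (T : RTree V) (a b : V) : V := if Anc T a b then b else a

lemma dist_le_depth_lowerOf (h : Anc T a b ∨ Anc T b a) :
    T.adj.dist a b ≤ T.depth (lowerOf T a b) := by
  unfold lowerOf
  split_ifs with hab
  · exact hab.dist_le_depth
  · rw [SimpleGraph.dist_comm]
    exact (h.resolve_left hab).dist_le_depth

lemma anc_lowerOf (ha : Anc T a c) (hb : Anc T b c) : Anc T (lowerOf T a b) c := by
  unfold lowerOf
  split_ifs
  exacts [hb, ha]

end Lower

section GeneTree

variable {𝒢 : Recon Γ VG₁ VS S} {u v : VG₁}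

lemma mem_gclade {g : Γ} : g ∈ gclade 𝒢 v ↔ Anc 𝒢.tree v (𝒢.geneLeaf g) := Iff.rfl

lemma Recon.exists_mem_gclade (𝒢 : Recon Γ VG₁ VS S) (v : VG₁) : ∃ g, g ∈ gclade 𝒢 v := by
  obtain ⟨l, hl, hvl⟩ := exists_isLeaf_anc 𝒢.tree v
  obtain ⟨g, rfl⟩ := (𝒢.geneLeaf_range l).mp hl
  exact ⟨g, hvl⟩

lemma Recon.gclade_geneLeaf (𝒢 : Recon Γ VG₁ VS S) (g : Γ) : gclade 𝒢 (𝒢.geneLeaf g) = {g} := by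
  ext g'
  rw [mem_gclade, Set.mem_singleton_iff]
  refine ⟨fun h => 𝒢.geneLeaf_inj (h.eq_of_isLeaf ((𝒢.geneLeaf_range _).mpr ⟨g, rfl⟩)), ?_⟩
  rintro rfl
  exact Anc.refl _ _

lemma Recon.exists_two_children (𝒢 : Recon Γ VG₁ VS S) (hv : ¬ IsLeaf 𝒢.tree v) :
    ∃ c₁ c₂, c₁ ≠ c₂ ∧ IsChild 𝒢.tree c₁ v ∧ IsChild 𝒢.tree c₂ v := by
  obtain ⟨c₁, hc₁, c₂, hc₂, hne⟩ :=
    (Set.one_lt_ncard (Set.toFinite _)).mp (𝒢.internal_children v hv)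
  exact ⟨c₁, c₂, hne, hc₁, hc₂⟩

lemma Recon.gclade_subset_or (𝒢 : Recon Γ VG₁ VS S) (u v : VG₁) :
    gclade 𝒢 u ⊆ gclade 𝒢 v ∨ gclade 𝒢 v ⊆ gclade 𝒢 u ∨ Disjoint (gclade 𝒢 u) (gclade 𝒢 v) := by
  by_contra! h
  obtain ⟨g, hgu, hgv⟩ := Set.not_disjoint_iff.mp h.2.2
  rcases Anc.total hgu hgv with huv | hvu
  · exact h.2.1 fun g' hg' => huv.trans hg'
  · exact h.1 fun g' hg' => hvu.trans hg'

/- Below a strict ancestor `u` of `v` hangs a second child subtree of `u`, whose genes are not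
below `v`. -/
lemma Anc.gclade_ne (huv : Anc 𝒢.tree u v) (hne : u ≠ v) : gclade 𝒢 u ≠ gclade 𝒢 v := by
  intro he
  obtain ⟨c, hc, hcv⟩ := huv.exists_isChild hne
  obtain ⟨c', hc', hc'c⟩ : ∃ c', IsChild 𝒢.tree c' u ∧ c' ≠ c := by
    obtain ⟨c₁, c₂, hne₁₂, hc₁, hc₂⟩ := 𝒢.exists_two_children (IsChild.not_isLeaf hc)
    by_cases h₁ : c₁ = c
    · exact ⟨c₂, hc₂, fun h₂ => hne₁₂ (h₁.trans h₂.symm)⟩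
    · exact ⟨c₁, hc₁, h₁⟩
  obtain ⟨g, hg⟩ := 𝒢.exists_mem_gclade c'
  have hgv : g ∈ gclade 𝒢 v := he ▸ hc'.2.trans hg
  exact hc'c (IsChild.eq_of_anc hc' hc hg (hcv.trans hgv))

lemma Recon.gclade_injective (𝒢 : Recon Γ VG₁ VS S) : Function.Injective (gclade 𝒢) := by
  intro u v he
  obtain ⟨g, hgu⟩ := 𝒢.exists_mem_gclade u
  have hgv : g ∈ gclade 𝒢 v := he ▸ hgu
  by_contra hne
  rcases Anc.total hgu hgv with huv | hvu
  · exact huv.gclade_ne hne he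
  · exact hvu.gclade_ne (Ne.symm hne) he.symm

end GeneTree

section SpeciesTreeCount

lemma Recon.one_lt_card_gclade [Fintype Γ] (𝒢 : Recon Γ VG₁ VS S) {v : VG₁}
    (hv : ¬ IsLeaf 𝒢.tree v) : 1 < #(gclade 𝒢 v).toFinset := by
  obtain ⟨c₁, c₂, hne, hc₁, hc₂⟩ := 𝒢.exists_two_children hv
  obtain ⟨g₁, hg₁⟩ := 𝒢.exists_mem_gclade c₁
  obtain ⟨g₂, hg₂⟩ := 𝒢.exists_mem_gclade c₂
  refine one_lt_card.mpr ⟨g₁, ?_, g₂, ?_, ?_⟩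
  · exact Set.mem_toFinset.mpr (hc₁.2.trans hg₁)
  · exact Set.mem_toFinset.mpr (hc₂.2.trans hg₂)
  · rintro rfl
    exact hne (IsChild.eq_of_anc hc₁ hc₂ hg₁ hg₂)

lemma Hsum_eq_sum_depth (S : RTree VS) :
    Hsum S = ∑ s ∈ univ.filter (fun s => ¬ IsLeaf S s), S.depth s := by
  rw [sum_filter, Hsum]
  refine sum_congr rfl fun s _ => ?_
  split_ifs <;> rfl

lemma card_internal_anc_le [Fintype Γ] (hS : IsSpeciesTree S) (𝒢 : Recon Γ VG₁ VS S)
    (hinj : Function.Injective (𝒢.μ ∘ 𝒢.geneLeaf)) (w : VG₁ → VS)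
    (hw : ∀ v, ∀ g ∈ gclade 𝒢 v, Anc S (w v) (𝒢.μ (𝒢.geneLeaf g))) (y : VS) :
    #((univ.filter fun v => ¬ IsLeaf 𝒢.tree v).filter fun v => Anc S y (w v)) ≤
      #((univ.filter fun s => ¬ IsLeaf S s).filter fun s => Anc S y s) := by
  set I := (univ.filter fun v => ¬ IsLeaf 𝒢.tree v).filter fun v => Anc S y (w v)
  set F := I.image fun v => (gclade 𝒢 v).toFinset
  set L := univ.filter fun g => Anc S y (𝒢.μ (𝒢.geneLeaf g))
  have hI : ∀ v ∈ I, ¬ IsLeaf 𝒢.tree v ∧ Anc S y (w v) := fun v hv => by simpa [I] using hv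
  have hFI : #F = #I := card_image_of_injective _
    (fun u v h => 𝒢.gclade_injective (Set.toFinset_inj.mp h))
  have hlam : IsLaminar F := by
    simp only [IsLaminar, F, forall_mem_image, Set.toFinset_subset_toFinset, Set.disjoint_toFinset]
    exact fun u _ v _ => 𝒢.gclade_subset_or u v
  have hFL : ∀ A ∈ F, A ⊆ L := by
    simp only [F, forall_mem_image]
    intro v hv g hg
    simpa [L] using (hI v hv).2.trans (hw v g (Set.mem_toFinset.mp hg))
  have htwo : ∀ A ∈ F, 2 ≤ #A := by
    simp only [F, forall_mem_image]
    exact fun v hv => 𝒢.one_lt_card_gclade (hI v hv).1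
  have hL : #L ≤ #((S.below y).filter (IsLeaf S)) := by
    refine card_le_card_of_injOn (𝒢.μ ∘ 𝒢.geneLeaf) (fun g hg => ?_) hinj.injOn
    exact mem_filter.mpr ⟨mem_below.mpr (mem_filter.mp hg).2,
      𝒢.leaf_species _ ((𝒢.geneLeaf_range _).mpr ⟨g, rfl⟩)⟩
  have hinternal : (univ.filter fun s => ¬ IsLeaf S s).filter (fun s => Anc S y s) =
      (S.below y).filter (¬ IsLeaf S ·) := by
    ext s
    simp [mem_below, and_comm]
  have := hlam.card_le_card_sub_one hFL htwo
  have := hS.card_leaves_below y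
  rw [hinternal]
  omega

lemma sum_depth_le_Hsum [Fintype Γ] (hS : IsSpeciesTree S) (𝒢 : Recon Γ VG₁ VS S)
    (hinj : Function.Injective (𝒢.μ ∘ 𝒢.geneLeaf)) (w : VG₁ → VS)
    (hw : ∀ v, ∀ g ∈ gclade 𝒢 v, Anc S (w v) (𝒢.μ (𝒢.geneLeaf g))) :
    ∑ v ∈ univ.filter (fun v => ¬ IsLeaf 𝒢.tree v), S.depth (w v) ≤ Hsum S := by
  rw [Hsum_eq_sum_depth]
  exact sum_depth_le_sum_depth _ _ w id (card_internal_anc_le hS 𝒢 hinj w hw)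

end SpeciesTreeCount

section LcaMap

variable {𝒢₁ : Recon Γ VG₁ VS S} {𝒢₂ : Recon Γ VG₂ VS S} {m : VG₁ → VG₂}

lemma IsLcaMap.apply_geneLeaf (hm : IsLcaMap 𝒢₁ 𝒢₂ m) (g : Γ) :
    m (𝒢₁.geneLeaf g) = 𝒢₂.geneLeaf g := by
  have hlca := hm (𝒢₁.geneLeaf g)
  rw [𝒢₁.gclade_geneLeaf, Set.image_singleton] at hlca
  exact (hlca.1 _ rfl).antisymm (hlca.2 _ fun x hx => hx ▸ Anc.refl _ _)

lemma IsLcaMap.anc_μ (hcomp : Comparable 𝒢₁ 𝒢₂) (hm : IsLcaMap 𝒢₁ 𝒢₂ m) {v : VG₁} {g : Γ}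
    (hg : g ∈ gclade 𝒢₁ v) : Anc S (𝒢₂.μ (m v)) (𝒢₁.μ (𝒢₁.geneLeaf g)) :=
  hcomp g ▸ 𝒢₂.time_consistent _ _ ((hm v).1 _ ⟨g, hg, rfl⟩)

lemma dPath_eq_sum_internal (hcomp : Comparable 𝒢₁ 𝒢₂) (hm : IsLcaMap 𝒢₁ 𝒢₂ m) :
    dPath 𝒢₁ 𝒢₂ m = ∑ v ∈ univ.filter (fun v => ¬ IsLeaf 𝒢₁.tree v),
      S.adj.dist (𝒢₁.μ v) (𝒢₂.μ (m v)) := by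
  rw [dPath, sum_filter]
  refine sum_congr rfl fun v _ => ?_
  split_ifs with hv
  · obtain ⟨g, rfl⟩ := (𝒢₁.geneLeaf_range v).mp hv
    rw [hm.apply_geneLeaf, hcomp, SimpleGraph.dist_self]
  · rfl

end LcaMap

theorem stmt8_general (hS : IsSpeciesTree S)
    (𝒢₁ : Recon {s : VS // IsLeaf S s} VG₁ VS S)
    (𝒢₂ : Recon {s : VS // IsLeaf S s} VG₂ VS S)
    (h₁ : OneGenePerSpecies 𝒢₁) (h₂ : OneGenePerSpecies 𝒢₂)
    (m : VG₁ → VG₂) (hm : IsLcaMap 𝒢₁ 𝒢₂ m) :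
    dPath 𝒢₁ 𝒢₂ m ≤ Hsum S := by
  have hcomp : Comparable 𝒢₁ 𝒢₂ := fun g => (h₁ g).trans (h₂ g).symm
  have hinj : Function.Injective (𝒢₁.μ ∘ 𝒢₁.geneLeaf) := fun g g' h =>
    Subtype.ext ((h₁ g).symm.trans (h.trans (h₁ g')))
  have hanc : ∀ v, ∀ g ∈ gclade 𝒢₁ v, Anc S (𝒢₁.μ v) (𝒢₁.μ (𝒢₁.geneLeaf g)) ∧
      Anc S (𝒢₂.μ (m v)) (𝒢₁.μ (𝒢₁.geneLeaf g)) :=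
    fun v g hg => ⟨𝒢₁.time_consistent _ _ hg, hm.anc_μ hcomp hg⟩
  calc dPath 𝒢₁ 𝒢₂ m
      = ∑ v ∈ univ.filter (fun v => ¬ IsLeaf 𝒢₁.tree v), S.adj.dist (𝒢₁.μ v) (𝒢₂.μ (m v)) :=
        dPath_eq_sum_internal hcomp hm
    _ ≤ ∑ v ∈ univ.filter (fun v => ¬ IsLeaf 𝒢₁.tree v),
          S.depth (lowerOf S (𝒢₁.μ v) (𝒢₂.μ (m v))) := by
        refine sum_le_sum fun v _ => dist_le_depth_lowerOf ?_
        obtain ⟨g, hg⟩ := 𝒢₁.exists_mem_gclade v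
        exact Anc.total (hanc v g hg).1 (hanc v g hg).2
    _ ≤ Hsum S := sum_depth_le_Hsum hS 𝒢₁ hinj _ fun v g hg =>
        anc_lowerOf (hanc v g hg).1 (hanc v g hg).2

/-- `d_path(𝒢₁,𝒢₂) ≤ H(S)` for gene trees with exactly one gene per species. -/
theorem stmt8 (hS : IsSpeciesTree S) (hn : 1 ≤ numLeaves S)
    (𝒢₁ : Recon {s : VS // IsLeaf S s} VG₁ VS S)
    (𝒢₂ : Recon {s : VS // IsLeaf S s} VG₂ VS S)
    (h₁ : OneGenePerSpecies 𝒢₁) (h₂ : OneGenePerSpecies 𝒢₂)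
    (m : VG₁ → VG₂) (hm : IsLcaMap 𝒢₁ 𝒢₂ m) :
    dPath 𝒢₁ 𝒢₂ m ≤ Hsum S :=
  stmt8_general hS 𝒢₁ 𝒢₂ h₁ h₂ m hm
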